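/- Let r₀ : [−Δ, 1+Δ] → ℝ be twice differentiable with derivative r₀' that is c₂-Lipschitz and satisfies r₀'(x₀*) = 0 for some x₀* ∈ (0,1). Suppose for all x and |ξ| ≤ ρ₀ we have the Taylor bounds ξ·r₀'(x) + c'₂ξ² ≤ r₀(x+ξ) − r₀(x) ≤ ξ·r₀'(x) + c̄'₂ξ². Define r₊(x) = r₀(x+Δ) and r₋(x) = r₀(x−Δ) for 0 < Δ ≤ ρ₀. Then for all x ∈ [0,1]: |r₊(x) − r₋(x)| ≤ 2Δc₂·|x − x₀*| + 2·max(|c'₂|, |c̄'₂|)·Δ². -/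
import Mathlib


/-- Part 2 of Lemma 3: the shifted regret functions `r₊(x) = r₀(x+Δ)` and `r₋(x) = r₀(x−Δ)`
satisfy `|r₊(x) − r₋(x)| ≤ 2Δc₂|x − x₀*| + 2 max(|c'₂|,|c̄'₂|)Δ²` on `[0,1]`. -/
theorem stmt_7 (r₀ : ℝ → ℝ) (c₂ ρ₀ Δ : ℝ) (c₂' c₂'' : ℝ) (x₀ : ℝ)
    (hc₂ : 0 < c₂) (hρ₀ : ρ₀ ∈ Set.Ioo (0 : ℝ) (1 / 2))
    (hΔ : 0 < Δ) (hΔρ : Δ ≤ ρ₀)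
    (hdiff : ∀ x ∈ Set.Icc (-Δ) (1 + Δ), DifferentiableAt ℝ r₀ x)
    (hdiff2 : ∀ x ∈ Set.Icc (-Δ) (1 + Δ), DifferentiableAt ℝ (deriv r₀) x)
    (hlip : ∀ x ∈ Set.Icc (-Δ) (1 + Δ), ∀ y ∈ Set.Icc (-Δ) (1 + Δ),
      |deriv r₀ x - deriv r₀ y| ≤ c₂ * |x - y|)
    (hx₀ : x₀ ∈ Set.Ioo (0 : ℝ) 1) (hderiv0 : deriv r₀ x₀ = 0)
    (htaylor : ∀ x ∈ Set.Icc (-Δ) (1 + Δ), ∀ ξ : ℝ, |ξ| ≤ ρ₀ →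
      x + ξ ∈ Set.Icc (-Δ) (1 + Δ) →
      ξ * deriv r₀ x + c₂' * ξ ^ 2 ≤ r₀ (x + ξ) - r₀ x ∧
        r₀ (x + ξ) - r₀ x ≤ ξ * deriv r₀ x + c₂'' * ξ ^ 2) :
    ∀ x ∈ Set.Icc (0 : ℝ) 1,
      |r₀ (x + Δ) - r₀ (x - Δ)| ≤ 2 * Δ * c₂ * |x - x₀| + 2 * max |c₂'| |c₂''| * Δ ^ 2 := by
  intro x hx
  obtain ⟨hx0, hx1⟩ := hx
  have hxmem : x ∈ Set.Icc (-Δ) (1 + Δ) := ⟨by linarith, by linarith⟩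
  have hx0mem : x₀ ∈ Set.Icc (-Δ) (1 + Δ) := ⟨by linarith [hx₀.1], by linarith [hx₀.2]⟩
  have hΔabs : |Δ| ≤ ρ₀ := by rw [abs_of_pos hΔ]; exact hΔρ
  have hnΔabs : |(-Δ)| ≤ ρ₀ := by rw [abs_neg]; exact hΔabs
  have h1 := htaylor x hxmem Δ hΔabs ⟨by linarith, by linarith⟩
  have h2 := htaylor x hxmem (-Δ) hnΔabs ⟨by linarith, by linarith⟩
  rw [show x + -Δ = x - Δ by ring] at h2
  have hlipx := hlip x hxmem x₀ hx0mem
  rw [hderiv0, sub_zero] at hlipx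
  have hM : c₂'' - c₂' ≤ 2 * max |c₂'| |c₂''| := by
    have := le_max_left |c₂'| |c₂''|
    have := le_max_right |c₂'| |c₂''|
    have := neg_abs_le c₂'
    have := le_abs_self c₂''
    linarith
  have hM' : c₂' - c₂'' ≤ 2 * max |c₂'| |c₂''| := by
    have := le_max_left |c₂'| |c₂''|
    have := le_max_right |c₂'| |c₂''|
    have := le_abs_self c₂'
    have := neg_abs_le c₂''
    linarith
  have hΔ2 : (0:ℝ) ≤ Δ ^ 2 := sq_nonneg Δ
  have hd := abs_le.mp hlipx
  rw [abs_le]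
  constructor
  · nlinarith [h1.1, h2.2, hd.1, abs_nonneg (x - x₀)]
  · nlinarith [h1.2, h2.1, hd.2, abs_nonneg (x - x₀)]
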